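/- arXiv:1709.04665 — 2 statements merged into one kernel-verified Lean document; each statement's English description precedes it below -/
import Mathlib

section
/- Let $f\in L^2(0,\infty)$ and define $g(y)=\int_0^\infty e^{-yt} f(t)\,dt$ for $y>0$ (the Laplace transform of $f$). Then $g\in L^2(0,\infty)$ and $\|g\|_{L^2(0,\infty)} \le \sqrt{\pi}\,\|f\|_{L^2(0,\infty)}$. -/
/-!
Schur's test with the weight `t ^ (-1/2)`: since `∫₀^∞ e^{-yt} t^{-1/2} dt = √π y^{-1/2}` by the
Gamma integral `Γ(1/2) = √π`, the weighted Cauchy–Schwarz inequality gives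
`|g y|² ≤ √π y^{-1/2} ∫ e^{-yt} t^{1/2} |f t|² dt`, and integrating in `y` (Tonelli, then the
same Gamma integral in `y`) yields `∫ |g|² ≤ π ∫ |f|²`.
-/

open MeasureTheory Set Real Function
open scoped ENNReal

section SchurTest

variable {α β : Type*} [MeasurableSpace α] [MeasurableSpace β] {μ : Measure α} {ν : Measure β}

theorem ENNReal.sq_lintegral_mul_le {f g : α → ℝ≥0∞} (hf : AEMeasurable f μ)
    (hg : AEMeasurable g μ) :
    (∫⁻ x, f x * g x ∂μ) ^ 2 ≤ (∫⁻ x, f x ^ 2 ∂μ) * ∫⁻ x, g x ^ 2 ∂μ := by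
  have hHolder := ENNReal.lintegral_mul_le_Lp_mul_Lq μ Real.HolderConjugate.two_two hf hg
  simp only [ENNReal.rpow_two, Pi.mul_apply] at hHolder
  calc (∫⁻ x, f x * g x ∂μ) ^ 2
      ≤ ((∫⁻ x, f x ^ 2 ∂μ) ^ (1 / 2 : ℝ) * (∫⁻ x, g x ^ 2 ∂μ) ^ (1 / 2 : ℝ)) ^ 2 := by
        gcongr
    _ = (∫⁻ x, f x ^ 2 ∂μ) * ∫⁻ x, g x ^ 2 ∂μ := by
        rw [mul_pow, ← ENNReal.rpow_natCast, ← ENNReal.rpow_natCast, ← ENNReal.rpow_mul,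
          ← ENNReal.rpow_mul]
        norm_num

theorem sq_lintegral_mul_le_of_weight {K F q : α → ℝ≥0∞} (hK : AEMeasurable K μ)
    (hF : AEMeasurable F μ) (hq : AEMeasurable q μ) (hq0 : ∀ᵐ x ∂μ, q x ≠ 0)
    (hq_top : ∀ᵐ x ∂μ, q x ≠ ∞) :
    (∫⁻ x, K x * F x ∂μ) ^ 2 ≤ (∫⁻ x, K x * q x ∂μ) * ∫⁻ x, K x * (F x ^ 2 / q x) ∂μ := by
  have sq_sqrt (a : ℝ≥0∞) : (a ^ (1 / 2 : ℝ)) ^ 2 = a := by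
    rw [← ENNReal.rpow_natCast, ← ENNReal.rpow_mul]; norm_num
  have split : ∀ᵐ x ∂μ, K x * F x =
      (K x * q x) ^ (1 / 2 : ℝ) * (K x * (F x ^ 2 / q x)) ^ (1 / 2 : ℝ) := by
    filter_upwards [hq0, hq_top] with x h0 htop
    rw [← ENNReal.mul_rpow_of_nonneg _ _ (by norm_num),
      show K x * q x * (K x * (F x ^ 2 / q x)) = (K x * F x) ^ 2 by
        rw [mul_mul_mul_comm, ENNReal.mul_div_cancel h0 htop]; ring,
      ← ENNReal.rpow_natCast, ← ENNReal.rpow_mul]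
    norm_num
  rw [lintegral_congr_ae split]
  have cauchySchwarz := ENNReal.sq_lintegral_mul_le
    (f := fun x => (K x * q x) ^ (1 / 2 : ℝ)) (g := fun x => (K x * (F x ^ 2 / q x)) ^ (1 / 2 : ℝ))
    (by fun_prop) (by fun_prop)
  simp only [sq_sqrt] at cauchySchwarz
  exact cauchySchwarz

theorem lintegral_sq_lintegral_mul_le_of_schur [SFinite μ] [SFinite ν] {K : α → β → ℝ≥0∞}
    (hK : Measurable (uncurry K)) {p : α → ℝ≥0∞} {q : β → ℝ≥0∞} (hp : Measurable p)
    (hq : Measurable q) (hq0 : ∀ᵐ y ∂ν, q y ≠ 0) (hq_top : ∀ᵐ y ∂ν, q y ≠ ∞) {C₁ C₂ : ℝ≥0∞}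
    (h₁ : ∀ᵐ x ∂μ, ∫⁻ y, K x y * q y ∂ν ≤ C₁ * p x)
    (h₂ : ∀ᵐ y ∂ν, ∫⁻ x, K x y * p x ∂μ ≤ C₂ * q y)
    {F : β → ℝ≥0∞} (hF : AEMeasurable F ν) :
    ∫⁻ x, (∫⁻ y, K x y * F y ∂ν) ^ 2 ∂μ ≤ C₁ * C₂ * ∫⁻ y, F y ^ 2 ∂ν := by
  set G := fun y => F y ^ 2 / q y
  have hG : AEMeasurable G ν := (hF.pow_const 2).div hq.aemeasurable
  calc ∫⁻ x, (∫⁻ y, K x y * F y ∂ν) ^ 2 ∂μ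
      ≤ ∫⁻ x, C₁ * p x * ∫⁻ y, K x y * G y ∂ν ∂μ := by
        refine lintegral_mono_ae (h₁.mono fun x hx => ?_)
        calc (∫⁻ y, K x y * F y ∂ν) ^ 2
            ≤ (∫⁻ y, K x y * q y ∂ν) * ∫⁻ y, K x y * G y ∂ν :=
              sq_lintegral_mul_le_of_weight hK.of_uncurry_left.aemeasurable hF
                hq.aemeasurable hq0 hq_top
          _ ≤ C₁ * p x * ∫⁻ y, K x y * G y ∂ν := by gcongr
    _ ≤ ∫⁻ x, ∫⁻ y, C₁ * p x * (K x y * G y) ∂ν ∂μ :=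
        lintegral_mono fun x => lintegral_const_mul_le _ _
    _ = ∫⁻ y, ∫⁻ x, C₁ * p x * (K x y * G y) ∂μ ∂ν :=
        lintegral_lintegral_swap (((hp.comp measurable_fst).const_mul _).aemeasurable.mul
          (hK.aemeasurable.mul hG.comp_snd))
    _ = ∫⁻ y, (∫⁻ x, K x y * p x ∂μ) * (C₁ * G y) ∂ν := by
        congr 1 with y
        rw [← lintegral_mul_const (f := fun x => K x y * p x) _ (hK.of_uncurry_right.mul hp)]
        congr 1 with x
        ring
    _ ≤ ∫⁻ y, C₂ * q y * (C₁ * G y) ∂ν := lintegral_mono_ae (h₂.mono fun y hy => by gcongr)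
    _ = ∫⁻ y, C₁ * C₂ * F y ^ 2 ∂ν := by
        refine lintegral_congr_ae ?_
        filter_upwards [hq0, hq_top] with y h0 htop
        rw [mul_mul_mul_comm, ENNReal.mul_div_cancel h0 htop]
        ring
    _ = C₁ * C₂ * ∫⁻ y, F y ^ 2 ∂ν := lintegral_const_mul'' _ (hF.pow_const 2)

theorem eLpNorm_two_sq_eq_lintegral {ε : Type*} [ENorm ε] (f : α → ε) :
    eLpNorm f 2 μ ^ 2 = ∫⁻ x, ‖f x‖ₑ ^ 2 ∂μ := by
  simpa using eLpNorm_nnreal_pow_eq_lintegral (f := f) (μ := μ) (p := 2) two_ne_zero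

end SchurTest

theorem lintegral_rpow_mul_exp_neg_mul_Ioi {a r : ℝ} (ha : 0 < a) (hr : 0 < r) :
    ∫⁻ t in Ioi (0 : ℝ), ENNReal.ofReal (t ^ (a - 1) * exp (-(r * t))) =
      ENNReal.ofReal ((1 / r) ^ a * Gamma a) := by
  have hint : IntegrableOn (fun t : ℝ => t ^ (a - 1) * exp (-(r * t))) (Ioi 0) := by
    simpa [neg_mul] using
      integrableOn_rpow_mul_exp_neg_mul_rpow (p := 1) (by linarith) one_pos hr
  rw [← integral_rpow_mul_exp_neg_mul_Ioi ha hr, ofReal_integral_eq_lintegral_ofReal hint]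
  filter_upwards [ae_restrict_mem measurableSet_Ioi] with t (ht : 0 < t)
  positivity

theorem lintegral_exp_neg_mul_mul_rpow_neg_half {y : ℝ} (hy : 0 < y) :
    ∫⁻ t in Ioi (0 : ℝ), ENNReal.ofReal (exp (-(y * t))) * ENNReal.ofReal (t ^ (-(1 / 2) : ℝ)) =
      ENNReal.ofReal √π * ENNReal.ofReal (y ^ (-(1 / 2) : ℝ)) := by
  have hGamma := lintegral_rpow_mul_exp_neg_mul_Ioi (a := 1 / 2) (by norm_num) hy
  rw [Gamma_one_half_eq, one_div y, inv_rpow hy.le, ← rpow_neg hy.le, mul_comm,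
    ENNReal.ofReal_mul (sqrt_nonneg _)] at hGamma
  rw [← hGamma]
  refine setLIntegral_congr_fun measurableSet_Ioi fun t ht => ?_
  rw [← ENNReal.ofReal_mul (exp_pos _).le, mul_comm]
  norm_num

section Laplace

variable {E : Type*} [NormedAddCommGroup E] [NormedSpace ℝ E]

noncomputable def laplace (f : ℝ → E) (y : ℝ) : E :=
  ∫ t in Ioi 0, exp (-(y * t)) • f t

theorem enorm_laplace_le (f : ℝ → E) (y : ℝ) :
    ‖laplace f y‖ₑ ≤ ∫⁻ t in Ioi 0, ENNReal.ofReal (exp (-(y * t))) * ‖f t‖ₑ := by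
  refine (enorm_integral_le_lintegral_enorm _).trans_eq (lintegral_congr fun t => ?_)
  rw [enorm_smul, enorm_eq_ofReal (exp_pos _).le]

theorem aestronglyMeasurable_laplace {μ : Measure ℝ} [SFinite μ] {f : ℝ → E}
    (hf : AEStronglyMeasurable f (volume.restrict (Ioi 0))) :
    AEStronglyMeasurable (laplace f) μ :=
  ((by fun_prop : Continuous fun p : ℝ × ℝ => exp (-(p.1 * p.2))).aestronglyMeasurable.smul
    hf.comp_snd).integral_prod_right'

theorem lintegral_enorm_laplace_sq_le {f : ℝ → E}
    (hf : AEStronglyMeasurable f (volume.restrict (Ioi 0))) :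
    ∫⁻ y in Ioi 0, ‖laplace f y‖ₑ ^ 2 ≤ ENNReal.ofReal π * ∫⁻ t in Ioi 0, ‖f t‖ₑ ^ 2 := by
  have hsqrt_pi : ENNReal.ofReal √π * ENNReal.ofReal √π = ENNReal.ofReal π := by
    rw [← ENNReal.ofReal_mul (sqrt_nonneg _), mul_self_sqrt pi_pos.le]
  have hweight : ∀ᵐ t ∂(volume.restrict (Ioi (0 : ℝ))),
      ENNReal.ofReal (t ^ (-(1 / 2) : ℝ)) ≠ 0 ∧ ENNReal.ofReal (t ^ (-(1 / 2) : ℝ)) ≠ ∞ := by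
    filter_upwards [ae_restrict_mem measurableSet_Ioi] with t (ht : 0 < t)
    exact ⟨by simp [rpow_pos_of_pos ht], ENNReal.ofReal_ne_top⟩
  calc ∫⁻ y in Ioi 0, ‖laplace f y‖ₑ ^ 2
      ≤ ∫⁻ y in Ioi 0, (∫⁻ t in Ioi 0, ENNReal.ofReal (exp (-(y * t))) * ‖f t‖ₑ) ^ 2 := by
        gcongr with y
        exact enorm_laplace_le f y
    _ ≤ ENNReal.ofReal √π * ENNReal.ofReal √π * ∫⁻ t in Ioi 0, ‖f t‖ₑ ^ 2 := by
        refine lintegral_sq_lintegral_mul_le_of_schur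
          (K := fun y t => ENNReal.ofReal (exp (-(y * t))))
          (p := fun t => ENNReal.ofReal (t ^ (-(1 / 2) : ℝ)))
          (q := fun t => ENNReal.ofReal (t ^ (-(1 / 2) : ℝ))) (by fun_prop) (by fun_prop)
          (by fun_prop) (hweight.mono fun _ => And.left) (hweight.mono fun _ => And.right) ?_ ?_
          hf.enorm
        all_goals filter_upwards [ae_restrict_mem measurableSet_Ioi] with y (hy : 0 < y)
        · exact (lintegral_exp_neg_mul_mul_rpow_neg_half hy).le
        · simpa only [mul_comm y] using (lintegral_exp_neg_mul_mul_rpow_neg_half hy).le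
    _ = ENNReal.ofReal π * ∫⁻ t in Ioi 0, ‖f t‖ₑ ^ 2 := by rw [hsqrt_pi]

theorem eLpNorm_laplace_le {f : ℝ → E}
    (hf : AEStronglyMeasurable f (volume.restrict (Ioi 0))) :
    eLpNorm (laplace f) 2 (volume.restrict (Ioi 0)) ≤
      ENNReal.ofReal √π * eLpNorm f 2 (volume.restrict (Ioi 0)) := by
  rw [← ENNReal.pow_le_pow_left_iff two_ne_zero, mul_pow, eLpNorm_two_sq_eq_lintegral,
    eLpNorm_two_sq_eq_lintegral, ← ENNReal.ofReal_pow (sqrt_nonneg _), sq_sqrt pi_pos.le]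
  exact lintegral_enorm_laplace_sq_le hf

theorem memLp_laplace {f : ℝ → E} (hf : MemLp f 2 (volume.restrict (Ioi 0))) :
    MemLp (laplace f) 2 (volume.restrict (Ioi 0)) :=
  ⟨aestronglyMeasurable_laplace hf.1,
    (eLpNorm_laplace_le hf.1).trans_lt (ENNReal.mul_lt_top ENNReal.ofReal_lt_top hf.2)⟩

end Laplace

theorem stmt2 (f : ℝ → ℂ)
    (hf : MemLp f 2 (volume.restrict (Set.Ioi (0:ℝ)))) :
    MemLp (fun y : ℝ => ∫ t in Set.Ioi (0:ℝ), Real.exp (-(y * t)) • f t) 2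
      (volume.restrict (Set.Ioi (0:ℝ))) ∧
    eLpNorm (fun y : ℝ => ∫ t in Set.Ioi (0:ℝ), Real.exp (-(y * t)) • f t) 2
        (volume.restrict (Set.Ioi (0:ℝ)))
      ≤ ENNReal.ofReal (Real.sqrt Real.pi) *
          eLpNorm f 2 (volume.restrict (Set.Ioi (0:ℝ))) :=
  ⟨memLp_laplace hf, eLpNorm_laplace_le hf.1⟩
end

section
/- Let $1\le p\le\infty$ and $q$ the conjugate exponent ($1/p+1/q=1$). Suppose $F, G$ are analytic on the half-strip $\Omega_+=\{|u|<\sigma,v>0\}$ with $\sup_{0<s<\sigma,t>0}\int_{\Gamma_{s,t}}|F|^p|dw| <\infty$ and $\sup_{0<s<\sigma,t>0}\int_{\Gamma_{s,t}}|G|^q|dw| <\infty$ (sup-norm condition when the exponent is $\infty$). Then for every $0<s<\sigma$ and $t>0$: $\int_{\Gamma_{s,t}} F(w)G(w)\,dw = 0$. -/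
/-!
Put `f = F G`. Hölder's inequality along the contours bounds `∫_{Γ_{s,t}} |f|` by `M_F M_G`
uniformly in `s` and `t`, and every vertical ray `{u + iv : v > t}` with `0 < |u| < σ` is part of
such a contour. Hence `f` is integrable on `Γ_{s,t}`, and Tonelli gives `∫_t^∞ |B v| dv < ∞` for the
horizontal integrals `B v = ∫_{-s}^{s} f (u + iv) du`. Cauchy's theorem on the rectangles
`[-s, s] × [t, v]` shows that `B v` tends to the contour integral as `v → ∞`, so that integral
vanishes.
-/

open MeasureTheory ENNReal

/-- Arc-length parametrization of the boundary `Γ_{s,t}` of the half-strip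
`D_{s,t} = {u+iv : |u| < s, v > t}`. -/

noncomputable def zetaParamST (s t b : ℝ) : ℂ :=
  if b < -s then -(s:ℂ) + ((t + (-b - s) : ℝ) : ℂ) * Complex.I
  else if b ≤ s then (b : ℂ) + (t : ℂ) * Complex.I
  else (s:ℂ) + ((t + (b - s) : ℝ) : ℂ) * Complex.I

/-- Derivative of the parametrization, encoding the orientation of `Γ_{s,t}`
(domain on the left: left ray downward, bottom left-to-right, right ray upward). -/

noncomputable def zetaDerivST (s b : ℝ) : ℂ :=
  if b < -s then -Complex.I else if b ≤ s then 1 else Complex.I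

open Filter Set Topology Complex Interval

lemma measurePreserving_add_const_restrict_Ioi (a c : ℝ) :
    MeasurePreserving (· + c) (volume.restrict (Ioi a)) (volume.restrict (Ioi (a + c))) := by
  simpa [preimage_add_const_Ioi] using
    (measurePreserving_add_right volume c).restrict_preimage (measurableSet_Ioi (a := a + c))

lemma measurePreserving_const_sub_restrict_Ioi (a c : ℝ) :
    MeasurePreserving (c - ·) (volume.restrict (Ioi a)) (volume.restrict (Iio (c - a))) := by
  simpa [preimage_const_sub_Iio] using
    (Measure.measurePreserving_sub_left volume c).restrict_preimage
      (measurableSet_Iio (a := c - a))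

theorem lintegral_enorm_mul_le_eLpNorm_mul_eLpNorm {α 𝕜 : Type*} [MeasurableSpace α]
    {μ : Measure α} [NormedRing 𝕜] {p q : ℝ≥0∞} (hpq : p⁻¹ + q⁻¹ = 1) {f g : α → 𝕜}
    (hf : AEStronglyMeasurable f μ) (hg : AEStronglyMeasurable g μ) :
    ∫⁻ x, ‖f x * g x‖ₑ ∂μ ≤ eLpNorm f p μ * eLpNorm g q μ := by
  have : HolderTriple p q 1 := ⟨by rwa [inv_one]⟩
  have key : eLpNorm (f • g) 1 μ ≤ eLpNorm f p μ * eLpNorm g q μ :=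
    eLpNorm_smul_le_mul_eLpNorm hg hf
  rwa [eLpNorm_one_eq_lintegral_enorm] at key

theorem eq_zero_of_tendsto_of_setLIntegral_Ioi_enorm_ne_top {E : Type*} [NormedAddCommGroup E]
    {g : ℝ → E} {c : E} {t : ℝ} (hg : Tendsto g atTop (𝓝 c))
    (hint : ∫⁻ v in Ioi t, ‖g v‖ₑ ≠ ∞) : c = 0 := by
  by_contra hc
  have hpos : 0 < ‖c‖ₑ / 2 := ENNReal.half_pos (enorm_ne_zero.2 hc)
  obtain ⟨W, hW⟩ := eventually_atTop.1
    (hg.enorm.eventually (lt_mem_nhds (ENNReal.half_lt_self (enorm_ne_zero.2 hc) enorm_ne_top)))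
  refine hint (eq_top_iff.2 ?_)
  calc ∞ = ∫⁻ _ in Ioi (max W t), ‖c‖ₑ / 2 := by
        rw [setLIntegral_const, Real.volume_Ioi, ENNReal.mul_top hpos.ne']
    _ ≤ ∫⁻ v in Ioi (max W t), ‖g v‖ₑ :=
        setLIntegral_mono' measurableSet_Ioi fun v hv =>
          (hW v ((le_max_left W t).trans hv.out.le)).le
    _ ≤ ∫⁻ v in Ioi t, ‖g v‖ₑ := lintegral_mono_set (Ioi_subset_Ioi (le_max_right W t))

theorem tendsto_intervalIntegral_horizontal_atTop {E : Type*} [NormedAddCommGroup E]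
    [NormedSpace ℂ E] [CompleteSpace E] {g : ℂ → E} {a b t : ℝ}
    (hg : DifferentiableOn ℂ g ([[a, b]] ×ℂ Ici t))
    (ha : IntegrableOn (fun v : ℝ => g (a + v * I)) (Ioi t))
    (hb : IntegrableOn (fun v : ℝ => g (b + v * I)) (Ioi t)) :
    Tendsto (fun v : ℝ => ∫ u in a..b, g (u + v * I)) atTop
      (𝓝 ((∫ u in a..b, g (u + t * I)) + I • (∫ v in Ioi t, g (b + v * I))
        - I • ∫ v in Ioi t, g (a + v * I))) := by
  have hlim := ((tendsto_const_nhds (x := ∫ u in a..b, g (u + t * I))).add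
    ((intervalIntegral_tendsto_integral_Ioi t hb tendsto_id).const_smul I)).sub
    ((intervalIntegral_tendsto_integral_Ioi t ha tendsto_id).const_smul I)
  refine hlim.congr' ?_
  filter_upwards [eventually_ge_atTop t] with v htv
  have hrect := integral_boundary_rect_eq_zero_of_differentiableOn g (a + t * I) (b + v * I)
    (hg.mono (by
      simpa [reProdIm_subset_iff'] using Or.inl (uIcc_of_le htv ▸ Icc_subset_Ici_self)))
  simp only [add_re, add_im, ofReal_re, ofReal_im, mul_re, mul_im, I_re, I_im, mul_zero,
    mul_one, sub_zero, add_zero, zero_add] at hrect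
  rw [← sub_eq_zero, ← hrect, id]
  abel

theorem setLIntegral_enorm_intervalIntegral_horizontal_lt_top {E : Type*} [NormedAddCommGroup E]
    [NormedSpace ℝ E] {g : ℂ → E} {a b t : ℝ} {M : ℝ≥0∞} (hab : a ≤ b)
    (hg : ContinuousOn g ([[a, b]] ×ℂ Ici t)) (hM : M ≠ ∞)
    (hvert : ∀ᵐ u : ℝ ∂(volume.restrict (Ioc a b)),
      ∫⁻ v : ℝ in Ioi t, ‖g (u + v * I)‖ₑ ≤ M) :
    ∫⁻ v in Ioi t, ‖∫ u in a..b, g (u + v * I)‖ₑ < ∞ := by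
  have hmeas : AEMeasurable (Function.uncurry fun u v : ℝ => ‖g (u + v * I)‖ₑ)
      ((volume.restrict (Ioc a b)).prod (volume.restrict (Ioi t))) := by
    rw [Measure.prod_restrict]
    refine (hg.comp (by fun_prop : Continuous fun z : ℝ × ℝ => (z.1 : ℂ) + z.2 * I).continuousOn
      ?_).enorm.aemeasurable (measurableSet_Ioc.prod measurableSet_Ioi)
    rintro ⟨u, v⟩ ⟨hu, hv⟩
    simpa [mem_reProdIm] using
      ⟨Icc_subset_uIcc (Ioc_subset_Icc_self hu), le_of_lt (mem_Ioi.1 hv)⟩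
  calc ∫⁻ v in Ioi t, ‖∫ u in a..b, g (u + v * I)‖ₑ
      ≤ ∫⁻ v in Ioi t, ∫⁻ u in Ioc a b, ‖g (u + v * I)‖ₑ := lintegral_mono fun v => by
        rw [intervalIntegral.integral_of_le hab]
        exact enorm_integral_le_lintegral_enorm _
    _ = ∫⁻ u in Ioc a b, ∫⁻ v in Ioi t, ‖g (u + v * I)‖ₑ :=
        (lintegral_lintegral_swap hmeas).symm
    _ ≤ ∫⁻ _ in Ioc a b, M := lintegral_mono_ae hvert
    _ < ∞ := by
      rw [setLIntegral_const, Real.volume_Ioc]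
      exact mul_lt_top hM.lt_top ofReal_lt_top

def halfStrip (σ : ℝ) : Set ℂ := {w : ℂ | |w.re| < σ ∧ 0 < w.im}

lemma ofReal_add_ofReal_mul_I_mem_halfStrip {σ u v : ℝ} :
    (u : ℂ) + v * I ∈ halfStrip σ ↔ |u| < σ ∧ 0 < v := by
  simp [halfStrip]

lemma reProdIm_uIcc_Ici_subset_halfStrip {σ s t : ℝ} (hsσ : |s| < σ) (ht : 0 < t) :
    [[-s, s]] ×ℂ Ici t ⊆ halfStrip σ := by
  rintro w ⟨hre, him⟩
  have : |w.re| ≤ |s| := by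
    rcases mem_uIcc.1 hre with h | h <;> rw [abs_le] <;> constructor <;>
      linarith [le_abs_self s, neg_abs_le s]
  exact ⟨this.trans_lt hsσ, ht.trans_le him⟩

section Contour

variable {s t b v : ℝ}

lemma zetaParamST_eq_max_min (hs : 0 ≤ s) (t b : ℝ) :
    zetaParamST s t b =
      ((max (-s) (min s b) : ℝ) : ℂ) + ((t + max 0 (|b| - s) : ℝ) : ℂ) * I := by
  unfold zetaParamST
  split_ifs with h₁ h₂
  · rw [min_eq_right (by linarith), max_eq_left h₁.le, abs_of_neg (by linarith),
      max_eq_right (by linarith)]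
    push_cast; ring
  · rw [min_eq_right h₂, max_eq_right (not_lt.1 h₁),
      max_eq_left (by linarith [abs_le.2 ⟨not_lt.1 h₁, h₂⟩]), add_zero]
  · rw [min_eq_left (by linarith), max_eq_right (by linarith), abs_of_pos (by linarith),
      max_eq_right (by linarith)]

lemma continuous_zetaParamST (hs : 0 ≤ s) (t : ℝ) : Continuous (zetaParamST s t) := by
  simp_rw [funext (zetaParamST_eq_max_min hs t)]
  fun_prop

lemma zetaParamST_mem_halfStrip {σ : ℝ} (hs : 0 ≤ s) (hsσ : s < σ) (ht : 0 < t) (b : ℝ) :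
    zetaParamST s t b ∈ halfStrip σ := by
  rw [zetaParamST_eq_max_min hs, ofReal_add_ofReal_mul_I_mem_halfStrip, abs_lt]
  refine ⟨⟨?_, ?_⟩, ?_⟩
  · linarith [le_max_left (-s) (min s b)]
  · linarith [max_le (by linarith : -s ≤ s) (min_le_left s b)]
  · linarith [le_max_left 0 (|b| - s)]

lemma zetaParamST_of_mem_Icc (h : b ∈ Icc (-s) s) : zetaParamST s t b = b + t * I := by
  rw [zetaParamST, if_neg (not_lt.2 h.1), if_pos h.2]

lemma zetaParamST_add_sub (hs : 0 ≤ s) (hv : t < v) :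
    zetaParamST s t (v + (s - t)) = s + v * I := by
  rw [zetaParamST, if_neg (by linarith), if_neg (by linarith)]
  push_cast; ring

lemma zetaParamST_sub_sub (hv : t < v) : zetaParamST s t (t - s - v) = -s + v * I := by
  rw [zetaParamST, if_pos (by linarith)]
  push_cast; ring

lemma measurable_zetaDerivST (s : ℝ) : Measurable (zetaDerivST s) :=
  Measurable.ite measurableSet_Iio measurable_const
    (Measurable.ite measurableSet_Iic measurable_const measurable_const)

end Contour

section ContourIntegral

variable {E : Type*} [NormedAddCommGroup E] [NormedSpace ℂ E] {s t : ℝ}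

lemma setLIntegral_comp_zetaParamST_Ioi (hs : 0 ≤ s) (g : ℂ → ℝ≥0∞) :
    ∫⁻ b in Ioi s, g (zetaParamST s t b) = ∫⁻ v in Ioi t, g (s + v * I) := by
  have := (measurePreserving_add_const_restrict_Ioi t (s - t)).lintegral_comp_emb
    (measurableEmbedding_addRight _) fun b => g (zetaParamST s t b)
  rw [add_sub_cancel] at this
  rw [← this]
  exact setLIntegral_congr_fun measurableSet_Ioi fun v hv => by rw [zetaParamST_add_sub hs hv]

lemma setLIntegral_comp_zetaParamST_Iio (g : ℂ → ℝ≥0∞) :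
    ∫⁻ b in Iio (-s), g (zetaParamST s t b) = ∫⁻ v in Ioi t, g (-s + v * I) := by
  have := (measurePreserving_const_sub_restrict_Ioi t (t - s)).lintegral_comp_emb
    (measurableEmbedding_subLeft _) fun b => g (zetaParamST s t b)
  rw [sub_sub_cancel_left] at this
  rw [← this]
  exact setLIntegral_congr_fun measurableSet_Ioi fun v hv => by rw [zetaParamST_sub_sub hv]

lemma setIntegral_comp_zetaParamST_Ioi (hs : 0 ≤ s) (g : ℂ → E) :
    ∫ b in Ioi s, g (zetaParamST s t b) = ∫ v in Ioi t, g (s + v * I) := by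
  have := (measurePreserving_add_const_restrict_Ioi t (s - t)).integral_comp
    (measurableEmbedding_addRight _) fun b => g (zetaParamST s t b)
  rw [add_sub_cancel] at this
  rw [← this]
  exact setIntegral_congr_fun measurableSet_Ioi fun v hv => by rw [zetaParamST_add_sub hs hv]

lemma setIntegral_comp_zetaParamST_Iio (g : ℂ → E) :
    ∫ b in Iio (-s), g (zetaParamST s t b) = ∫ v in Ioi t, g (-s + v * I) := by
  have := (measurePreserving_const_sub_restrict_Ioi t (t - s)).integral_comp
    (measurableEmbedding_subLeft _) fun b => g (zetaParamST s t b)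
  rw [sub_sub_cancel_left] at this
  rw [← this]
  exact setIntegral_congr_fun measurableSet_Ioi fun v hv => by rw [zetaParamST_sub_sub hv]

lemma setLIntegral_vertical_le_lintegral_comp_zetaParamST {u : ℝ} (hu : u ≠ 0)
    (g : ℂ → ℝ≥0∞) :
    ∫⁻ v in Ioi t, g (u + v * I) ≤ ∫⁻ b, g (zetaParamST |u| t b) := by
  rcases hu.lt_or_gt with hneg | hpos
  · have hu' : (u : ℂ) = -((|u| : ℝ) : ℂ) := by rw [abs_of_neg hneg]; push_cast; ring
    rw [hu', ← setLIntegral_comp_zetaParamST_Iio]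
    exact setLIntegral_le_lintegral _ _
  · have hu' : (u : ℂ) = ((|u| : ℝ) : ℂ) := by rw [abs_of_pos hpos]
    rw [hu', ← setLIntegral_comp_zetaParamST_Ioi (abs_nonneg u)]
    exact setLIntegral_le_lintegral _ _

theorem integral_zetaDerivST_smul_comp_zetaParamST (hs : 0 ≤ s) {g : ℂ → E}
    (hg : Integrable fun b => g (zetaParamST s t b)) :
    ∫ b, zetaDerivST s b • g (zetaParamST s t b) =
      (∫ u in -s..s, g (u + t * I)) + I • (∫ v in Ioi t, g (s + v * I))
        - I • ∫ v in Ioi t, g (-s + v * I) := by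
  set h := fun b => zetaDerivST s b • g (zetaParamST s t b)
  have hh : Integrable h := hg.bdd_smul 1 (measurable_zetaDerivST s).aestronglyMeasurable
    (ae_of_all _ fun b => by unfold zetaDerivST; split_ifs <;> simp)
  have hleft : ∫ b in Iio (-s), h b = -I • ∫ v in Ioi t, g (-s + v * I) := by
    rw [← setIntegral_comp_zetaParamST_Iio, ← integral_smul]
    exact setIntegral_congr_fun measurableSet_Iio fun b hb => by
      simp [h, zetaDerivST, mem_Iio.1 hb]
  have hbottom : ∫ b in Ioc (-s) s, h b = ∫ u in -s..s, g (u + t * I) := by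
    rw [intervalIntegral.integral_of_le (by linarith)]
    exact setIntegral_congr_fun measurableSet_Ioc fun b hb => by
      simp [h, zetaDerivST, not_lt.2 hb.1.le, hb.2,
        zetaParamST_of_mem_Icc (Ioc_subset_Icc_self hb)]
  have hright : ∫ b in Ioi s, h b = I • ∫ v in Ioi t, g (s + v * I) := by
    rw [← setIntegral_comp_zetaParamST_Ioi hs, ← integral_smul]
    exact setIntegral_congr_fun measurableSet_Ioi fun b hb => by
      simp [h, zetaDerivST, not_lt.2 ((neg_nonpos.2 hs).trans (hs.trans hb.le)),
        not_le.2 hb.out]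
  rw [← intervalIntegral.integral_Iic_add_Ioi hh.integrableOn hh.integrableOn,
    setIntegral_congr_set Iio_ae_eq_Iic.symm,
    ← Ioc_union_Ioi_eq_Ioi (by linarith : -s ≤ s),
    setIntegral_union (Ioc_disjoint_Ioi le_rfl) measurableSet_Ioi hh.integrableOn hh.integrableOn,
    hleft, hbottom, hright, neg_smul]
  abel

end ContourIntegral

theorem integral_zetaDerivST_smul_comp_zetaParamST_eq_zero {E : Type*} [NormedAddCommGroup E]
    [NormedSpace ℂ E] [CompleteSpace E] {σ : ℝ} {f : ℂ → E}
    (hf : DifferentiableOn ℂ f (halfStrip σ)) {M : ℝ≥0∞} (hM : M ≠ ∞)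
    (hcontour : ∀ s t : ℝ, 0 < s → s < σ → 0 < t → ∫⁻ b, ‖f (zetaParamST s t b)‖ₑ ≤ M)
    {s t : ℝ} (hs : 0 < s) (hsσ : s < σ) (ht : 0 < t) :
    ∫ b, zetaDerivST s b • f (zetaParamST s t b) = 0 := by
  have hvert {u : ℝ} (hu : u ≠ 0) (huσ : |u| < σ) :
      ∫⁻ v : ℝ in Ioi t, ‖f (u + v * I)‖ₑ ≤ M :=
    (setLIntegral_vertical_le_lintegral_comp_zetaParamST hu fun w => ‖f w‖ₑ).trans
      (hcontour _ _ (abs_pos.2 hu) huσ ht)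
  have hvert_int {u : ℝ} (hu : u ≠ 0) (huσ : |u| < σ) :
      IntegrableOn (fun v : ℝ => f (u + v * I)) (Ioi t) :=
    ⟨(hf.continuousOn.comp (by fun_prop : Continuous fun v : ℝ => (u : ℂ) + v * I).continuousOn
        fun v hv => ofReal_add_ofReal_mul_I_mem_halfStrip.2 ⟨huσ, ht.trans hv⟩).aestronglyMeasurable
        measurableSet_Ioi,
      (hvert hu huσ).trans_lt hM.lt_top⟩
  have hint : Integrable fun b => f (zetaParamST s t b) :=
    ⟨(hf.continuousOn.comp_continuous (continuous_zetaParamST hs.le t)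
        (zetaParamST_mem_halfStrip hs.le hsσ ht)).aestronglyMeasurable,
      (hcontour s t hs hsσ ht).trans_lt hM.lt_top⟩
  have hsσ' : |s| < σ := by rwa [abs_of_pos hs]
  have hrect : [[-s, s]] ×ℂ Ici t ⊆ halfStrip σ := reProdIm_uIcc_Ici_subset_halfStrip hsσ' ht
  have hlim := tendsto_intervalIntegral_horizontal_atTop (hf.mono hrect)
    (hvert_int (neg_ne_zero.2 hs.ne') (by rwa [abs_neg])) (hvert_int hs.ne' hsσ')
  push_cast at hlim
  -- the line `u = 0` lies on no contour, but it is a null set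
  have htail := setLIntegral_enorm_intervalIntegral_horizontal_lt_top (by linarith)
    (hf.continuousOn.mono hrect) hM (by
      filter_upwards [ae_restrict_mem measurableSet_Ioc,
        ae_restrict_of_ae (Measure.ae_ne volume 0)] with u hu hu0
      exact hvert hu0 ((abs_le.2 ⟨hu.1.le, hu.2⟩).trans_lt hsσ))
  rw [integral_zetaDerivST_smul_comp_zetaParamST hs.le hint]
  exact eq_zero_of_tendsto_of_setLIntegral_Ioi_enorm_ne_top hlim htail.ne

theorem stmt18_general (σ : ℝ) (p q : ℝ≥0∞)
    (hpq : p⁻¹ + q⁻¹ = 1)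
    (F G : ℂ → ℂ)
    (hF : DifferentiableOn ℂ F {w : ℂ | |w.re| < σ ∧ 0 < w.im})
    (hG : DifferentiableOn ℂ G {w : ℂ | |w.re| < σ ∧ 0 < w.im})
    (MF MG : ℝ≥0∞) (hMF : MF < ⊤) (hMG : MG < ⊤)
    (hFbd : ∀ s t : ℝ, 0 < s → s < σ → 0 < t →
      eLpNorm (fun b : ℝ => F (zetaParamST s t b)) p volume ≤ MF)
    (hGbd : ∀ s t : ℝ, 0 < s → s < σ → 0 < t →
      eLpNorm (fun b : ℝ => G (zetaParamST s t b)) q volume ≤ MG)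
    (s t : ℝ) (hs : 0 < s) (hsσ : s < σ) (ht : 0 < t) :
    (∫ b : ℝ, F (zetaParamST s t b) * G (zetaParamST s t b) * zetaDerivST s b) = 0 := by
  have hcomp {H : ℂ → ℂ} (hH : ContinuousOn H (halfStrip σ)) {s' t' : ℝ} (hs' : 0 < s')
      (hs'σ : s' < σ) (ht' : 0 < t') : AEStronglyMeasurable fun b => H (zetaParamST s' t' b) :=
    (hH.comp_continuous (continuous_zetaParamST hs'.le t')
      (zetaParamST_mem_halfStrip hs'.le hs'σ ht')).aestronglyMeasurable
  have hcontour (s' t' : ℝ) (hs' : 0 < s') (hs'σ : s' < σ) (ht' : 0 < t') :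
      ∫⁻ b, ‖F (zetaParamST s' t' b) * G (zetaParamST s' t' b)‖ₑ ≤ MF * MG :=
    (lintegral_enorm_mul_le_eLpNorm_mul_eLpNorm hpq (hcomp hF.continuousOn hs' hs'σ ht')
      (hcomp hG.continuousOn hs' hs'σ ht')).trans
      (mul_le_mul' (hFbd s' t' hs' hs'σ ht') (hGbd s' t' hs' hs'σ ht'))
  calc _ = ∫ b, zetaDerivST s b • (F (zetaParamST s t b) * G (zetaParamST s t b)) :=
        integral_congr_ae (ae_of_all _ fun b => mul_comm _ _)
    _ = 0 := integral_zetaDerivST_smul_comp_zetaParamST_eq_zero (f := fun w => F w * G w)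
        (hF.mul hG) (mul_ne_top hMF.ne hMG.ne) hcontour hs hsσ ht

theorem stmt18 (σ : ℝ) (hσ : 0 < σ) (p q : ℝ≥0∞) (hp : 1 ≤ p)
    (hpq : p⁻¹ + q⁻¹ = 1)
    (F G : ℂ → ℂ)
    (hF : DifferentiableOn ℂ F {w : ℂ | |w.re| < σ ∧ 0 < w.im})
    (hG : DifferentiableOn ℂ G {w : ℂ | |w.re| < σ ∧ 0 < w.im})
    (MF MG : ℝ≥0∞) (hMF : MF < ⊤) (hMG : MG < ⊤)
    (hFbd : ∀ s t : ℝ, 0 < s → s < σ → 0 < t →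
      eLpNorm (fun b : ℝ => F (zetaParamST s t b)) p volume ≤ MF)
    (hGbd : ∀ s t : ℝ, 0 < s → s < σ → 0 < t →
      eLpNorm (fun b : ℝ => G (zetaParamST s t b)) q volume ≤ MG)
    (s t : ℝ) (hs : 0 < s) (hsσ : s < σ) (ht : 0 < t) :
    (∫ b : ℝ, F (zetaParamST s t b) * G (zetaParamST s t b) * zetaDerivST s b) = 0 :=
  stmt18_general σ p q hpq F G hF hG MF MG hMF hMG hFbd hGbd s t hs hsσ ht
end
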